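/- Let G be a graph such that every finite subgraph of G has path-width at most k, and G is maximal with this property under adding edges. Then every finite subgraph G' of G admits a path-decomposition of width at most k in which every bag is a clique of G'. -/

import Mathlib

open Set

universe u

/-- The intersection graph of a family `F` of sets: vertices are the members of `F`,
two distinct members adjacent iff they intersect. -/
def IntGraph {W : Type u} (F : Set (Set W)) : SimpleGraph F where
  Adj S T := S ≠ T ∧ ((S : Set W) ∩ (T : Set W)).Nonempty
  symm := by
    refine ⟨?_⟩
    rintro S T ⟨h1, x, hx1, hx2⟩
    exact ⟨h1.symm, x, hx2, hx1⟩
  loopless := by refine ⟨?_⟩; rintro S ⟨h, _⟩; exact h rfl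

/-- `G` has an induced cycle of length at least 4. -/
def HasLongInducedCycle {V : Type u} (G : SimpleGraph V) : Prop :=
  ∃ n : ℕ, 4 ≤ n ∧ ∃ f : ZMod n → V, Function.Injective f ∧
    ∀ i j : ZMod n, G.Adj (f i) (f j) ↔ (j = i + 1 ∨ i = j + 1)

/-- A graph is chordal iff it has no induced cycle of length at least 4. -/
def Chordal {V : Type u} (G : SimpleGraph V) : Prop := ¬ HasLongInducedCycle G

/-- The chordal property for a family of sets: its intersection graph is chordal. -/
def ChordalProp {W : Type u} (F : Set (Set W)) : Prop := Chordal (IntGraph F)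

/-- The finite Helly property: every nonempty finite subfamily whose members pairwise
intersect has a common element. -/
def FiniteHelly {W : Type u} (F : Set (Set W)) : Prop :=
  ∀ R : Finset (Set W), R.Nonempty → ↑R ⊆ F →
    (∀ S ∈ R, ∀ T ∈ R, S ≠ T → (S ∩ T).Nonempty) →
    (⋂ S ∈ R, S).Nonempty

/-- A family `F` is well-founded if there is no sequence `(Sᵢ)` of members of `F` with
nonempty total intersection such that no partial intersection `S₀ ∩ ⋯ ∩ Sᵢ` is contained
in `S_{i+1}`. -/
def WellFoundedFamily {W : Type u} (F : Set (Set W)) : Prop :=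
  ¬ ∃ S : ℕ → Set W, (∀ i, S i ∈ F) ∧ (⋂ i, S i).Nonempty ∧
      ∀ i, ¬ (⋂ j ≤ i, S j) ⊆ S (i + 1)

/-- `X` is `F`-connected: for every partition of `X` into two nonempty parts, some
member of `F` included in `X` meets both parts. -/
def FConnected {W : Type u} (F : Set (Set W)) (X : Set W) : Prop :=
  ∀ A B : Set W, A ∪ B = X → A ∩ B = ∅ → A.Nonempty → B.Nonempty →
    ∃ S ∈ F, S ⊆ X ∧ (S ∩ A).Nonempty ∧ (S ∩ B).Nonempty

/-- A path-decomposition of `G` indexed by `Fin n`: bags cover all vertices and edges,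
and for each vertex the set of indices of bags containing it is an interval. -/
def IsPathDecomp {V : Type u} (G : SimpleGraph V) {n : ℕ} (B : Fin n → Finset V) : Prop :=
  (∀ v, ∃ i, v ∈ B i) ∧
  (∀ u v, G.Adj u v → ∃ i, u ∈ B i ∧ v ∈ B i) ∧
  (∀ v : V, ∀ i i' i'' : Fin n, i ≤ i' → i' ≤ i'' → v ∈ B i → v ∈ B i'' → v ∈ B i')

/-- `G` has path-width at most `k`: some path-decomposition has all bags of size ≤ k+1. -/
def PathWidthLE {V : Type u} (G : SimpleGraph V) (k : ℕ) : Prop :=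
  ∃ (n : ℕ) (B : Fin n → Finset V), IsPathDecomp G B ∧ ∀ i, (B i).card ≤ k + 1

/-- `G` has line-width at most `k`: there is a decomposition indexed by a linearly ordered
set, satisfying the path-decomposition axioms, with all bags of size ≤ k+1. -/
def LineWidthLE {V : Type u} (G : SimpleGraph V) (k : ℕ) : Prop :=
  ∃ (L : Type u) (r : L → L → Prop), IsLinearOrder L r ∧
    ∃ B : L → Finset V,
      (∀ v, ∃ i, v ∈ B i) ∧
      (∀ u v, G.Adj u v → ∃ i, u ∈ B i ∧ v ∈ B i) ∧
      (∀ v i i' i'', r i i' → r i' i'' → v ∈ B i → v ∈ B i'' → v ∈ B i') ∧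
      ∀ i, (B i).card ≤ k + 1

/-! If `u, v` are nonadjacent, edge-maximality provides a finite set `S` on which `G + uv` has
path-width `> k`. Take a width-`≤ k` path-decomposition of `G` on the finite set `W ⊇ U`
containing all these witness sets for pairs in `U`. If two nonadjacent `u, v ∈ U` shared a bag,
that decomposition would also cover the edge `uv`, and restricting it to `S` would decompose
`G + uv` there with width `≤ k`. Hence the restriction to `U` has clique bags. -/

lemma Finset.card_preimage_le_of_injective {α β : Type*} (s : Finset β) {f : α → β}
    (hf : Function.Injective f) : (s.preimage f hf.injOn).card ≤ s.card :=
  Finset.card_le_card_of_injOn f (fun _ hx => Finset.mem_preimage.mp hx) hf.injOn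

namespace IsPathDecomp

variable {V W : Type u} {G : SimpleGraph V} {n : ℕ} {B : Fin n → Finset V}

lemma of_adj_covered {H : SimpleGraph V} (hB : IsPathDecomp G B)
    (hH : ∀ x y, H.Adj x y → G.Adj x y ∨ ∃ i, x ∈ B i ∧ y ∈ B i) : IsPathDecomp H B :=
  ⟨hB.1, fun x y hxy => (hH x y hxy).elim (hB.2.1 x y) id, hB.2.2⟩

lemma comap {H : SimpleGraph W} (hB : IsPathDecomp G B) (f : H →g G)
    (hf : Function.Injective f) : IsPathDecomp H fun i => (B i).preimage f hf.injOn := by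
  simp only [IsPathDecomp, Finset.mem_preimage]
  exact ⟨fun x => hB.1 (f x), fun x y hxy => hB.2.1 _ _ (f.map_adj hxy),
    fun x => hB.2.2 (f x)⟩

end IsPathDecomp

lemma PathWidthLE.comap {V W : Type u} {G : SimpleGraph V} {H : SimpleGraph W} {k : ℕ}
    {n : ℕ} {B : Fin n → Finset V} (hB : IsPathDecomp G B) (hBk : ∀ i, (B i).card ≤ k + 1)
    (f : H →g G) (hf : Function.Injective f) : PathWidthLE H k :=
  ⟨n, _, hB.comap f hf, fun i => ((B i).card_preimage_le_of_injective hf).trans (hBk i)⟩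

lemma notMem_common_bag_of_not_pathWidthLE_sup_edge {V : Type u} {G : SimpleGraph V} {k : ℕ}
    {u v : V} {S W : Finset V}
    (hS : ¬ PathWidthLE ((G ⊔ SimpleGraph.fromEdgeSet {s(u, v)}).induce (↑S : Set V)) k)
    (hSW : S ⊆ W) (hu : u ∈ W) (hv : v ∈ W) {n : ℕ} {B : Fin n → Finset (↑W : Set V)}
    (hB : IsPathDecomp (G.induce (↑W : Set V)) B) (hBk : ∀ i, (B i).card ≤ k + 1)
    (i : Fin n) : ¬ (⟨u, hu⟩ ∈ B i ∧ ⟨v, hv⟩ ∈ B i) := by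
  rintro ⟨hui, hvi⟩
  have hB' : IsPathDecomp ((G ⊔ SimpleGraph.fromEdgeSet {s(u, v)}).induce (↑W : Set V)) B := by
    refine hB.of_adj_covered fun x y hxy => ?_
    rcases hxy with hG | ⟨hxy, -⟩
    · exact .inl hG
    · right
      refine ⟨i, ?_⟩
      rcases Sym2.eq_iff.mp hxy with ⟨h₁, h₂⟩ | ⟨h₁, h₂⟩
      · obtain rfl : x = ⟨u, hu⟩ := Subtype.ext h₁
        obtain rfl : y = ⟨v, hv⟩ := Subtype.ext h₂
        exact ⟨hui, hvi⟩
      · obtain rfl : x = ⟨v, hv⟩ := Subtype.ext h₁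
        obtain rfl : y = ⟨u, hu⟩ := Subtype.ext h₂
        exact ⟨hvi, hui⟩
  let ι := (G ⊔ SimpleGraph.fromEdgeSet {s(u, v)}).induceHomOfLE (Finset.coe_subset.mpr hSW)
  exact hS (.comap hB' hBk ι.toHom ι.injective)

/-- If every finite subgraph of `G` has path-width at most `k` and `G` is edge-maximal
with this property, then every finite subgraph of `G` has a path-decomposition of width
at most `k` all of whose bags are cliques. -/
theorem stmt15 {V : Type u} (G : SimpleGraph V) (k : ℕ)
    (h : ∀ U : Finset V, PathWidthLE (G.induce (↑U : Set V)) k)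
    (hmax : ∀ u v : V, u ≠ v → ¬ G.Adj u v →
      ∃ U : Finset V,
        ¬ PathWidthLE ((G ⊔ SimpleGraph.fromEdgeSet {s(u, v)}).induce (↑U : Set V)) k) :
    ∀ U : Finset V, ∃ (n : ℕ) (B : Fin n → Finset (↑U : Set V)),
      IsPathDecomp (G.induce (↑U : Set V)) B ∧ (∀ i, (B i).card ≤ k + 1) ∧
      ∀ i, (G.induce (↑U : Set V)).IsClique (↑(B i) : Set (↑U : Set V)) := by
  classical
  intro U
  choose! S hS using hmax
  set W := U ∪ U.biUnion fun u => U.biUnion (S u)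
  have hUW : U ⊆ W := Finset.subset_union_left
  have hSW {u v : V} (hu : u ∈ U) (hv : v ∈ U) : S u v ⊆ W := fun x hx =>
    Finset.mem_union_right _ (Finset.mem_biUnion.mpr ⟨u, hu, Finset.mem_biUnion.mpr ⟨v, hv, hx⟩⟩)
  obtain ⟨n, B, hB, hBk⟩ := h W
  let ι := SimpleGraph.induceHomOfLE G (Finset.coe_subset.mpr hUW)
  refine ⟨n, _, hB.comap ι.toHom ι.injective,
    fun i => ((B i).card_preimage_le_of_injective ι.injective).trans (hBk i),
    fun i a ha b hb hab => ?_⟩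
  by_contra hnadj
  exact notMem_common_bag_of_not_pathWidthLE_sup_edge
    (hS a b (fun e => hab (Subtype.ext e)) (by simpa using hnadj)) (hSW a.2 b.2)
    (hUW a.2) (hUW b.2) hB hBk i ⟨Finset.mem_preimage.mp ha, Finset.mem_preimage.mp hb⟩
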